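/- For every p = p(n) with 1/n < p ≤ 2 ln n/n (d = pn), a.a.s. every connected set S of vertices of G_{n,p} with |S| ≤ n/(60d²) satisfies |S| − 1 ≤ e(S) ≤ 2|S|. -/

import Mathlib

open MeasureTheory Finset Filter

noncomputable section

attribute [local instance] Classical.propDecidable

/-- The Bernoulli measure on `Bool` with success probability `p` (truncated to `[0,1]`). -/
def bernoulliMeasure (p : ℝ) : Measure Bool :=
  (PMF.bernoulli (min (Real.toNNReal p) 1) (min_le_right _ _)).toMeasure

instance (p : ℝ) : IsProbabilityMeasure (bernoulliMeasure p) :=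
  PMF.toMeasure.isProbabilityMeasure _

/-- The Erdős–Rényi measure: each (ordered-pair-indexed) coordinate is an independent
Bernoulli(p); the graph only reads the coordinate `(min i j, max i j)`, so each of the
`n(n-1)/2` potential edges is present independently with probability `p`. -/
def gnp (n : ℕ) (p : ℝ) : Measure (Fin n → Fin n → Bool) :=
  Measure.pi fun _ => Measure.pi fun _ => bernoulliMeasure p

/-- The simple graph on `Fin n` determined by a sample point `ω`. -/
def graphOf {n : ℕ} (ω : Fin n → Fin n → Bool) : SimpleGraph (Fin n) where
  Adj i j := i ≠ j ∧ ω (min i j) (max i j) = true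
  symm := by
    constructor
    intro i j h
    exact ⟨h.1.symm, by rw [min_comm, max_comm]; exact h.2⟩
  loopless := by constructor; intro i h; exact h.1 rfl

/-- `d(S)`: the sum of the degrees of the vertices of `S`. -/
def degSum {V : Type*} (G : SimpleGraph V) (S : Finset V) : ℕ :=
  ∑ v ∈ S, (G.neighborSet v).ncard

/-- The sum of degrees over a set of vertices. -/
def degSumSet {V : Type*} (G : SimpleGraph V) (A : Set V) : ℕ :=
  ∑ᶠ v ∈ A, (G.neighborSet v).ncard

/-- `e(S)`: the number of edges with both endpoints in `S`. -/
def edgesIn {V : Type*} (G : SimpleGraph V) (S : Set V) : ℕ :=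
  {e ∈ G.edgeSet | ∀ v ∈ e, v ∈ S}.ncard

/-- `e^out(S)`: the number of edges with exactly one endpoint in `S`. -/
def edgesOut {V : Type*} (G : SimpleGraph V) (S : Set V) : ℕ :=
  {e ∈ G.edgeSet | (∃ v ∈ e, v ∈ S) ∧ (∃ v ∈ e, v ∉ S)}.ncard

/-- The number of edges with one endpoint in `A` and one in `B` (for disjoint `A`, `B`). -/
def edgesBetween {V : Type*} (G : SimpleGraph V) (A B : Set V) : ℕ :=
  {e ∈ G.edgeSet | ∃ v ∈ e, ∃ w ∈ e, v ∈ A ∧ w ∈ B}.ncard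

/-- A set of vertices is connected if the induced subgraph is connected. -/
def connSet {V : Type*} (G : SimpleGraph V) (S : Set V) : Prop :=
  (G.induce S).Connected

/-- `c` is a largest ("giant") connected component. -/
def isGiant {V : Type*} (G : SimpleGraph V) (c : G.ConnectedComponent) : Prop :=
  ∀ c' : G.ConnectedComponent, c'.supp.ncard ≤ c.supp.ncard

/-- Transition matrix of the simple random walk on `G`. -/
def transMatrix {V : Type*} (G : SimpleGraph V) : Matrix V V ℝ :=
  Matrix.of fun i j => if G.Adj i j then ((G.neighborSet i).ncard : ℝ)⁻¹ else 0

/-- Stationary distribution of the simple random walk on `G`: `π(v) = deg v / (2 |E|)`. -/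
def statDist {V : Type*} (G : SimpleGraph V) (v : V) : ℝ :=
  ((G.neighborSet v).ncard : ℝ) / (2 * (G.edgeSet.ncard : ℝ))

/-- Total variation distance between two (signed) distributions on a finite type. -/
def dTV {V : Type*} [Fintype V] (μ ν : V → ℝ) : ℝ :=
  ⨆ A : Finset V, |∑ v ∈ A, μ v - ∑ v ∈ A, ν v|

/-- `μ` is a probability distribution on the finite type `V`. -/
def IsProbDist {V : Type*} [Fintype V] (μ : V → ℝ) : Prop :=
  (∀ v, 0 ≤ μ v) ∧ ∑ v, μ v = 1

/-- `T_mix`: the supremum over initial distributions of the first time the walk is within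
`1/e` of `π` in total variation. -/
def mixTimeP {V : Type*} [Fintype V] [DecidableEq V] (P : Matrix V V ℝ) (pi : V → ℝ) : ℕ :=
  sSup {T : ℕ | ∃ μ, IsProbDist μ ∧
    T = sInf {t : ℕ | dTV (Matrix.vecMul μ (P ^ t)) pi < (Real.exp 1)⁻¹}}

/-- `T'_mix`: the averaged mixing time, using the Cesàro average `(1/t) ∑_{s<t} P^s`. -/
def avgMixTimeP {V : Type*} [Fintype V] [DecidableEq V] (P : Matrix V V ℝ) (pi : V → ℝ) : ℕ :=
  sSup {T : ℕ | ∃ μ, IsProbDist μ ∧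
    T = sInf {t : ℕ |
      dTV (Matrix.vecMul μ ((t : ℝ)⁻¹ • ∑ s ∈ Finset.range t, P ^ s)) pi < (Real.exp 1)⁻¹}}

/-- The mixing time of the simple random walk on the graph `G`. -/
def mixingTime {V : Type*} [Fintype V] [DecidableEq V] (G : SimpleGraph V) : ℕ :=
  mixTimeP (transMatrix G) (statDist G)

/-- The averaged mixing time of the simple random walk on the graph `G`. -/
def avgMixingTime {V : Type*} [Fintype V] [DecidableEq V] (G : SimpleGraph V) : ℕ :=
  avgMixTimeP (transMatrix G) (statDist G)

/-- `π(S)` for a finite Markov chain. -/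
def chainPi {V : Type*} [Fintype V] (pi : V → ℝ) (S : Finset V) : ℝ :=
  ∑ i ∈ S, pi i

/-- `Q(S) = ∑_{i ∈ S, j ∉ S} π(i) P(i,j)`. -/
def chainQ {V : Type*} [Fintype V] [DecidableEq V] (P : Matrix V V ℝ) (pi : V → ℝ)
    (S : Finset V) : ℝ :=
  ∑ i ∈ S, ∑ j ∈ Sᶜ, pi i * P i j

/-- The conductance `Φ(S) = Q(S)/(π(S) π(Sᶜ))`. -/
def chainPhi {V : Type*} [Fintype V] [DecidableEq V] (P : Matrix V V ℝ) (pi : V → ℝ)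
    (S : Finset V) : ℝ :=
  chainQ P pi S / (chainPi pi S * chainPi pi Sᶜ)

/-- The graph on the states with an edge between `i` and `j` when `P i j > 0`
(symmetrized). -/
def chainGraph {V : Type*} (P : Matrix V V ℝ) : SimpleGraph V where
  Adj i j := i ≠ j ∧ (0 < P i j ∨ 0 < P j i)
  symm := by
    constructor
    intro i j h
    exact ⟨h.1.symm, h.2.symm⟩
  loopless := by constructor; intro i h; exact h.1 rfl

/-- `Φ(x)`: the minimum conductance of a connected set `S` with `x/2 ≤ π(S) ≤ x`
(equal to `1` if no such set exists). -/
def PhiAt {V : Type*} [Fintype V] [DecidableEq V] (P : Matrix V V ℝ) (pi : V → ℝ)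
    (x : ℝ) : ℝ :=
  if ∃ S : Finset V, ((chainGraph P).induce (S : Set V)).Connected ∧
      x / 2 ≤ chainPi pi S ∧ chainPi pi S ≤ x then
    sInf {y : ℝ | ∃ S : Finset V, ((chainGraph P).induce (S : Set V)).Connected ∧
      x / 2 ≤ chainPi pi S ∧ chainPi pi S ≤ x ∧ y = chainPhi P pi S}
  else 1

/-- The minimum conductance `Φ(G)` of the simple random walk on `G`, over sets with
`0 < π(S) ≤ 1/2`. -/
def minConductance {V : Type*} [Fintype V] [DecidableEq V] (G : SimpleGraph V) : ℝ :=
  sInf {y : ℝ | ∃ S : Finset V, 0 < chainPi (statDist G) S ∧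
    chainPi (statDist G) S ≤ 1 / 2 ∧ y = chainPhi (transMatrix G) (statDist G) S}

/-- The vertex set of the core (maximal subgraph of minimum degree ≥ 2) of the induced
subgraph of `G` on `W`. -/
def coreWithin {V : Type*} (G : SimpleGraph V) (W : Set V) : Set V :=
  ⋃₀ {A : Set V | A ⊆ W ∧ ∀ v ∈ A, 2 ≤ (A ∩ G.neighborSet v).ncard}

/-- A dangling tree of `G` on vertex set `A` with root `r`: the induced subgraph on `A`
is a tree and every non-root vertex of `A` has all its `G`-neighbours inside `A`. -/
def IsDanglingTree {V : Type*} (G : SimpleGraph V) (A : Set V) (r : V) : Prop :=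
  r ∈ A ∧ (G.induce A).IsTree ∧ ∀ v ∈ A, v ≠ r → G.neighborSet v ⊆ A

lemma succ_pow_le_three (k : ℕ) : ((k : ℝ) + 1)^k ≤ 3 * (k : ℝ)^k := by
  rcases Nat.eq_zero_or_pos k with rfl | hk
  · norm_num
  · have hk0 : (0:ℝ) < k := by exact_mod_cast hk
    have h1 : ((k:ℝ) + 1) = (k:ℝ) * (1 + 1/(k:ℝ)) := by field_simp
    have h2 : (1 + 1/(k:ℝ)) ≤ Real.exp (1/(k:ℝ)) := by
      have := Real.add_one_le_exp (1/(k:ℝ)); linarith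
    have h3 : ((1:ℝ) + 1/(k:ℝ))^k ≤ (Real.exp (1/(k:ℝ)))^k := by
      apply pow_le_pow_left₀ (by positivity) h2
    have h4 : (Real.exp (1/(k:ℝ)))^k = Real.exp 1 := by
      rw [← Real.exp_nat_mul]
      congr 1
      field_simp
    have h5 : Real.exp 1 ≤ 3 := by
      have := Real.exp_one_lt_d9; linarith
    calc ((k:ℝ)+1)^k = (k:ℝ)^k * (1 + 1/(k:ℝ))^k := by rw [h1, mul_pow]
      _ ≤ (k:ℝ)^k * 3 := by
          apply mul_le_mul_of_nonneg_left _ (by positivity)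
          calc ((1:ℝ) + 1/(k:ℝ))^k ≤ (Real.exp (1/(k:ℝ)))^k := h3
            _ = Real.exp 1 := h4
            _ ≤ 3 := h5
      _ = 3 * (k:ℝ)^k := by ring

lemma pow_self_le (k : ℕ) : (k : ℝ)^k ≤ 3^k * (Nat.factorial k : ℝ) := by
  induction k with
  | zero => norm_num
  | succ k ih =>
    have h1 : ((k:ℝ)+1)^k ≤ 3 * (k:ℝ)^k := succ_pow_le_three k
    have h2 : (0:ℝ) ≤ (k:ℝ) + 1 := by positivity
    calc ((k+1:ℕ) : ℝ)^(k+1) = ((k:ℝ)+1) * ((k:ℝ)+1)^k := by push_cast; ring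
      _ ≤ ((k:ℝ)+1) * (3 * (k:ℝ)^k) := by apply mul_le_mul_of_nonneg_left h1 h2
      _ ≤ ((k:ℝ)+1) * (3 * (3^k * (Nat.factorial k : ℝ))) := by
          apply mul_le_mul_of_nonneg_left _ h2
          apply mul_le_mul_of_nonneg_left ih (by norm_num)
      _ = 3^(k+1) * (((k:ℝ)+1) * (Nat.factorial k : ℝ)) := by ring
      _ = 3^(k+1) * (Nat.factorial (k+1) : ℝ) := by
          rw [Nat.factorial_succ]; push_cast; ring

lemma choose_bound (n k : ℕ) : (n.choose k : ℝ) * (k:ℝ)^k ≤ (3 * (n:ℝ))^k := by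
  have h1 : (n.choose k : ℝ) ≤ (n:ℝ)^k / (Nat.factorial k : ℝ) := by
    exact_mod_cast Nat.choose_le_pow_div k n
  have hf : (0:ℝ) < (Nat.factorial k : ℝ) := by exact_mod_cast Nat.factorial_pos k
  have h2 := pow_self_le k
  calc (n.choose k : ℝ) * (k:ℝ)^k ≤ ((n:ℝ)^k / (Nat.factorial k : ℝ)) * (3^k * (Nat.factorial k : ℝ)) := by
        apply mul_le_mul h1 h2 (by positivity) (by positivity)
    _ = (3 * (n:ℝ))^k := by field_simp; ring

lemma pow6_bound : ∀ k : ℕ, 6 ≤ k → k^6 ≤ 6^6 * 3^(k-6) := by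
  intro k hk
  induction k, hk using Nat.le_induction with
  | base => norm_num
  | succ k hk ih =>
    have h1 : 6 * (k+1) ≤ 7 * k := by omega
    have h2 : (6*(k+1))^6 ≤ (7*k)^6 := Nat.pow_le_pow_left h1 6
    have h3 : 6^6 * (k+1)^6 ≤ 7^6 * k^6 := by
      calc 6^6 * (k+1)^6 = (6*(k+1))^6 := by ring
        _ ≤ (7*k)^6 := h2
        _ = 7^6 * k^6 := by ring
    have h4 : 7^6 * k^6 ≤ 3 * (6^6 * k^6) := by nlinarith [Nat.zero_le (k^6)]
    have h5 : (k+1)^6 ≤ 3 * k^6 := by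
      have := h3.trans h4
      omega
    calc (k+1)^6 ≤ 3 * k^6 := h5
      _ ≤ 3 * (6^6 * 3^(k-6)) := by omega
      _ = 6^6 * 3^(k+1-6) := by
          have : k+1-6 = (k-6)+1 := by omega
          rw [this, pow_succ]; ring

lemma conn_card_le {V : Type*} [Fintype V] (G : SimpleGraph V) (hG : G.Connected) :
    Fintype.card V ≤ G.edgeSet.ncard + 1 := by
  classical
  have hne : Nonempty V := hG.nonempty
  obtain ⟨r⟩ := hne
  have hstep : ∀ v : V, v ≠ r → ∃ w : V, G.Adj v w ∧ G.dist w r < G.dist v r := by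
    intro v hv
    obtain ⟨p, hp⟩ := hG.exists_walk_length_eq_dist v r
    have hpos : 0 < G.dist v r := hG.pos_dist_of_ne hv
    cases p with
    | nil => exact absurd rfl hv
    | cons h q =>
      refine ⟨_, h, ?_⟩
      have h1 : G.dist _ r ≤ q.length := SimpleGraph.dist_le q
      simp [SimpleGraph.Walk.length_cons] at hp
      omega
  choose g hg1 hg2 using hstep
  set f : V → Sym2 V := fun v => if h : v ≠ r then s(v, g v h) else s(r, r) with hf
  have hmem : ∀ v (hv : v ≠ r), f v ∈ G.edgeSet := by
    intro v hv
    simp only [hf, dif_pos hv, SimpleGraph.mem_edgeSet]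
    exact hg1 v hv
  have hinj : Set.InjOn f {v | v ≠ r} := by
    intro a ha b hb hab
    simp only [Set.mem_setOf_eq] at ha hb
    simp only [hf, dif_pos ha, dif_pos hb] at hab
    rw [Sym2.eq_iff] at hab
    rcases hab with ⟨h1, _⟩ | ⟨h1, h2⟩
    · exact h1
    · exfalso
      have d1 := hg2 a ha
      have d2 := hg2 b hb
      subst h1
      rw [h2] at d1
      omega
  have hcard : ({v : V | v ≠ r}).ncard ≤ G.edgeSet.ncard := by
    have : {v : V | v ≠ r}.ncard = (f '' {v : V | v ≠ r}).ncard := by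
      rw [Set.ncard_image_of_injOn hinj]
    rw [this]
    apply Set.ncard_le_ncard
    · rintro e ⟨v, hv, rfl⟩
      exact hmem v hv
    · exact Set.toFinite _
  have heq : ({v : V | v ≠ r}).ncard = Fintype.card V - 1 := by
    have h1 : {v : V | v ≠ r} = ↑((Finset.univ : Finset V).erase r) := by
      ext v; simp
    rw [h1, Set.ncard_coe_finset, Finset.card_erase_of_mem (Finset.mem_univ r),
      Finset.card_univ]
  have hpos : 1 ≤ Fintype.card V := @Fintype.card_pos _ _ ⟨r⟩
  omega

lemma edgesIn_eq_induce {V : Type*} (G : SimpleGraph V) (s : Set V) :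
    edgesIn G s = (G.induce s).edgeSet.ncard := by
  rw [edgesIn]
  rw [← Set.ncard_image_of_injective (G.induce s).edgeSet
    (Sym2.map.injective Subtype.val_injective)]
  congr 1
  ext e
  constructor
  · rintro ⟨he, hv⟩
    induction e with
    | _ x y =>
      refine ⟨s(⟨x, hv x (by simp)⟩, ⟨y, hv y (by simp)⟩), ?_, by simp⟩
      simpa using he
  · rintro ⟨e', he', rfl⟩
    induction e' with
    | _ a b =>
      refine ⟨by simpa using he', ?_⟩
      intro v hv
      simp only [Sym2.map_pair_eq, Sym2.mem_iff] at hv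
      rcases hv with rfl | rfl
      · exact a.2
      · exact b.2

lemma ncard_edgeSet_eq {V : Type*} [Fintype V] (G : SimpleGraph V) [Fintype G.edgeSet] :
    G.edgeSet.ncard = G.edgeFinset.card := by
  rw [SimpleGraph.edgeFinset]
  exact Set.ncard_eq_toFinset_card' _

lemma fintype_card_coe {V : Type*} [Fintype V] (S : Finset V) :
    Fintype.card (↑S : Set V) = S.card := by
  rw [← Nat.card_eq_fintype_card, Nat.card_coe_set_eq, Set.ncard_coe_finset]

lemma edgesIn_le_choose {V : Type*} [Fintype V] (G : SimpleGraph V) (S : Finset V) :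
    edgesIn G ↑S ≤ (S.card).choose 2 := by
  rw [edgesIn_eq_induce, ncard_edgeSet_eq]
  calc (G.induce ↑S).edgeFinset.card ≤ (Fintype.card (↑S : Set V)).choose 2 :=
        SimpleGraph.card_edgeFinset_le_card_choose_two
    _ = (S.card).choose 2 := by rw [fintype_card_coe]

lemma conn_lower {V : Type*} [Fintype V] (G : SimpleGraph V) (S : Finset V)
    (h : connSet G ↑S) : S.card ≤ edgesIn G ↑S + 1 := by
  rw [edgesIn_eq_induce]
  have := conn_card_le (G.induce ↑S) (show (G.induce ↑S).Connected from h)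
  rwa [fintype_card_coe] at this

def allPairs (n : ℕ) (S : Finset (Fin n)) : Finset (Fin n × Fin n) :=
  (S ×ˢ S).filter fun q => q.1 < q.2

def edgePairs {n : ℕ} (ω : Fin n → Fin n → Bool) (S : Finset (Fin n)) :
    Finset (Fin n × Fin n) :=
  (allPairs n S).filter fun q => ω q.1 q.2 = true

lemma sym2_mk_inf_sup {α : Type*} [LinearOrder α] (x : Sym2 α) : s(x.inf, x.sup) = x :=
  Sym2.sortEquiv.symm_apply_apply x

lemma edgesIn_le_pairs {n : ℕ} (ω : Fin n → Fin n → Bool) (S : Finset (Fin n)) :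
    edgesIn (graphOf ω) ↑S ≤ (edgePairs ω S).card := by
  set E := {e ∈ (graphOf ω).edgeSet | ∀ v ∈ e, v ∈ (↑S : Set (Fin n))} with hE
  set f : Sym2 (Fin n) → Fin n × Fin n := fun e => (e.inf, e.sup) with hf
  have hinj : Set.InjOn f E := by
    intro a _ b _ hab
    have := sym2_mk_inf_sup a
    rw [← sym2_mk_inf_sup a, ← sym2_mk_inf_sup b]
    simp only [hf, Prod.mk.injEq] at hab
    rw [hab.1, hab.2]
  have hsub : f '' E ⊆ ↑(edgePairs ω S) := by
    rintro q ⟨e, he, rfl⟩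
    induction e with
    | _ a b =>
      obtain ⟨hadj, hmem⟩ := he
      rw [SimpleGraph.mem_edgeSet] at hadj
      obtain ⟨hne, hω⟩ := hadj
      have ha : a ∈ S := by simpa using hmem a (by simp)
      have hb : b ∈ S := by simpa using hmem b (by simp)
      simp only [hf, Sym2.inf_mk, Sym2.sup_mk, Finset.mem_coe, edgePairs, allPairs,
        Finset.mem_filter, Finset.mem_product]
      rw [show a ⊓ b = min a b from rfl, show a ⊔ b = max a b from rfl]
      refine ⟨⟨⟨?_, ?_⟩, ?_⟩, ?_⟩
      · rcases min_choice a b with h | h <;> rw [h] <;> assumption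
      · rcases max_choice a b with h | h <;> rw [h] <;> assumption
      · exact min_lt_max.mpr hne
      · exact hω
  calc edgesIn (graphOf ω) ↑S = E.ncard := rfl
    _ = (f '' E).ncard := (Set.ncard_image_of_injOn hinj).symm
    _ ≤ (↑(edgePairs ω S) : Set (Fin n × Fin n)).ncard :=
        Set.ncard_le_ncard hsub (Set.toFinite _)
    _ = (edgePairs ω S).card := Set.ncard_coe_finset _

def eventT {n : ℕ} (T : Finset (Fin n × Fin n)) : Set (Fin n → Fin n → Bool) :=
  {ω | ∀ q ∈ T, ω q.1 q.2 = true}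

lemma bern_true (p : ℝ) : bernoulliMeasure p {true} = min (ENNReal.ofReal p) 1 := by
  rw [bernoulliMeasure, PMF.toMeasure_apply_singleton _ _ (measurableSet_singleton _)]
  exact ENNReal.coe_min _ _

lemma meas_eventT {n : ℕ} (p : ℝ) (T : Finset (Fin n × Fin n)) :
    gnp n p (eventT T) = (min (ENNReal.ofReal p) 1) ^ T.card := by
  have hset : eventT T = Set.pi Set.univ
      (fun i => Set.pi Set.univ (fun j => if (i, j) ∈ T then {true} else Set.univ)) := by
    ext ω
    simp only [eventT, Set.mem_setOf_eq, Set.mem_pi, Set.mem_univ, forall_true_left]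
    constructor
    · intro h i j
      by_cases hij : (i, j) ∈ T
      · simp [hij, h (i, j) hij]
      · simp [hij]
    · intro h q hq
      have := h q.1 q.2
      rw [if_pos hq] at this
      simpa using this
  rw [hset, gnp, Measure.pi_pi]
  have hinner : ∀ i : Fin n,
      (Measure.pi fun _ => bernoulliMeasure p)
        (Set.pi Set.univ (fun j => if (i, j) ∈ T then {true} else Set.univ))
      = ∏ j : Fin n, (if (i, j) ∈ T then min (ENNReal.ofReal p) 1 else 1) := by
    intro i
    rw [Measure.pi_pi]
    apply Finset.prod_congr rfl
    intro j _
    by_cases hij : (i, j) ∈ T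
    · rw [if_pos hij, if_pos hij, bern_true]
    · rw [if_neg hij, if_neg hij, measure_univ]
  calc (∏ i : Fin n, (Measure.pi fun _ => bernoulliMeasure p)
        (Set.pi Set.univ (fun j => if (i, j) ∈ T then {true} else Set.univ)))
      = ∏ i : Fin n, ∏ j : Fin n, (if (i, j) ∈ T then min (ENNReal.ofReal p) 1 else 1) := by
        exact Finset.prod_congr rfl fun i _ => hinner i
    _ = ∏ q ∈ (Finset.univ ×ˢ Finset.univ : Finset (Fin n × Fin n)),
          (if q ∈ T then min (ENNReal.ofReal p) 1 else 1) := by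
        rw [Finset.prod_product]
    _ = ∏ q ∈ ((Finset.univ ×ˢ Finset.univ : Finset (Fin n × Fin n)) ∩ T),
          min (ENNReal.ofReal p) 1 := Finset.prod_ite_mem _ _ _
    _ = (min (ENNReal.ofReal p) 1) ^ T.card := by
        rw [Finset.univ_product_univ, Finset.univ_inter, Finset.prod_const]

lemma per_k (n k : ℕ) (p : ℝ) (hk6 : 6 ≤ k) (hp0 : 0 < p) (hnp : 1 ≤ (n:ℝ) * p)
    (h60 : 60 * (k:ℝ) * (n:ℝ) * p^2 ≤ 1) :
    (n.choose k : ℝ) * (((k^2).choose (2*k+1)) : ℝ) * p^(2*k+1)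
      ≤ (1/40) * ((27/4)*(n:ℝ)*p^2)^6 * 6^6 * (27/80)^(k-6) := by
  have hc0 : (0:ℝ) < (k:ℝ) := by
    have : 0 < k := by omega
    exact_mod_cast this
  have hn0 : (0:ℝ) < (n:ℝ) := by nlinarith
  set c : ℝ := (k:ℝ) with hcdef
  -- E1
  have E1 : (n.choose k : ℝ) ≤ (3*(n:ℝ))^k / c^k := by
    rw [le_div_iff₀ (by positivity)]
    exact choose_bound n k
  -- E2
  have E2 : (((k^2).choose (2*k+1)) : ℝ) ≤ (3*c^2)^(2*k+1) / (2*c)^(2*k+1) := by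
    rw [le_div_iff₀ (by positivity)]
    have h1 := choose_bound (k^2) (2*k+1)
    have h2 : ((2*c))^(2*k+1) ≤ (((2*k+1 : ℕ)):ℝ)^(2*k+1) := by
      apply pow_le_pow_left₀ (by positivity)
      push_cast; linarith
    calc (((k^2).choose (2*k+1)) : ℝ) * (2*c)^(2*k+1)
        ≤ (((k^2).choose (2*k+1)) : ℝ) * (((2*k+1:ℕ)):ℝ)^(2*k+1) := by
          apply mul_le_mul_of_nonneg_left h2 (by positivity)
      _ ≤ (3 * ((k^2 : ℕ) : ℝ))^(2*k+1) := h1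
      _ = (3*c^2)^(2*k+1) := by push_cast; ring
  have hA0 : (0:ℝ) ≤ (27/4)*(n:ℝ)*c*p^2 := by positivity
  have hkp : c * p ≤ 1/60 := by nlinarith
  have hAle : (27/4)*(n:ℝ)*c*p^2 ≤ 9/80 := by nlinarith
  have hB0 : (0:ℝ) ≤ (27/4)*(n:ℝ)*p^2 := by positivity
  -- main chain
  have key : (3*(n:ℝ))^k / c^k * ((3*c^2)^(2*k+1) / (2*c)^(2*k+1)) * p^(2*k+1)
      = (3*c*p/2) * ((27/4)*(n:ℝ)*c*p^2)^k := by
    have hpowrw : ∀ x : ℝ, x^(2*k+1) = (x^2)^k * x := by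
      intro x; rw [pow_succ, pow_mul]
    rw [hpowrw, hpowrw, hpowrw]
    field_simp
    ring_nf
    rw [mul_assoc _ ((4:ℝ)^k), mul_assoc _ ((3:ℝ)^k), ← mul_pow, ← mul_pow]; norm_num
  have step1 : (n.choose k : ℝ) * (((k^2).choose (2*k+1)) : ℝ) * p^(2*k+1)
      ≤ (3*c*p/2) * ((27/4)*(n:ℝ)*c*p^2)^k := by
    rw [← key]
    apply mul_le_mul_of_nonneg_right _ (by positivity)
    apply mul_le_mul E1 E2 (by positivity) (by positivity)
  have hb : 3*c*p/2 ≤ 1/40 := by nlinarith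
  have hAk : ((27/4)*(n:ℝ)*c*p^2)^k
      ≤ ((27/4)*(n:ℝ)*p^2)^6 * 6^6 * (27/80)^(k-6) := by
    have h1 : ((27/4)*(n:ℝ)*c*p^2)^k
        = ((27/4)*(n:ℝ)*c*p^2)^6 * ((27/4)*(n:ℝ)*c*p^2)^(k-6) := by
      rw [← pow_add]; congr 1; omega
    rw [h1]
    have h2 : ((27/4)*(n:ℝ)*c*p^2)^(k-6) ≤ (9/80)^(k-6) :=
      pow_le_pow_left₀ hA0 hAle _
    have h3 : ((27/4)*(n:ℝ)*c*p^2)^6 = ((27/4)*(n:ℝ)*p^2)^6 * c^6 := by ring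
    have h4 : c^6 ≤ 6^6 * 3^(k-6) := by
      have h := pow6_bound k hk6
      have h' : ((k:ℝ))^6 ≤ ((6^6 * 3^(k-6) : ℕ) : ℝ) := by exact_mod_cast h
      calc c^6 = ((k:ℝ))^6 := by rw [hcdef]
        _ ≤ ((6^6 * 3^(k-6) : ℕ) : ℝ) := h'
        _ = 6^6 * 3^(k-6) := by push_cast; ring
    calc ((27/4)*(n:ℝ)*c*p^2)^6 * ((27/4)*(n:ℝ)*c*p^2)^(k-6)
        ≤ ((27/4)*(n:ℝ)*c*p^2)^6 * (9/80)^(k-6) := by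
          apply mul_le_mul_of_nonneg_left h2 (by positivity)
      _ = ((27/4)*(n:ℝ)*p^2)^6 * c^6 * (9/80)^(k-6) := by rw [h3]
      _ ≤ ((27/4)*(n:ℝ)*p^2)^6 * (6^6 * 3^(k-6)) * (9/80)^(k-6) := by
          apply mul_le_mul_of_nonneg_right _ (by positivity)
          apply mul_le_mul_of_nonneg_left h4 (by positivity)
      _ = ((27/4)*(n:ℝ)*p^2)^6 * 6^6 * (27/80)^(k-6) := by
          rw [show ((27:ℝ)/80)^(k-6) = 3^(k-6) * (9/80)^(k-6) by rw [← mul_pow]; norm_num]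
          ring
  calc (n.choose k : ℝ) * (((k^2).choose (2*k+1)) : ℝ) * p^(2*k+1)
      ≤ (3*c*p/2) * ((27/4)*(n:ℝ)*c*p^2)^k := step1
    _ ≤ (1/40) * (((27/4)*(n:ℝ)*p^2)^6 * 6^6 * (27/80)^(k-6)) := by
        apply mul_le_mul hb hAk (by positivity) (by norm_num)
    _ = (1/40) * ((27/4)*(n:ℝ)*p^2)^6 * 6^6 * (27/80)^(k-6) := by ring

instance gnp_prob (n : ℕ) (p : ℝ) : IsProbabilityMeasure (gnp n p) := by
  rw [gnp]; infer_instance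

def GoodSet (n : ℕ) (p : ℝ) : Set (Fin n → Fin n → Bool) :=
  {ω | ∀ S : Finset (Fin n), connSet (graphOf ω) (S : Set (Fin n)) →
    (S.card : ℝ) ≤ n / (60 * ((n : ℝ) * p) ^ 2) →
    (S.card : ℝ) - 1 ≤ (edgesIn (graphOf ω) (S : Set (Fin n)) : ℝ) ∧
      edgesIn (graphOf ω) (S : Set (Fin n)) ≤ 2 * S.card}

lemma main_bound (n : ℕ) (p : ℝ) (hp0 : 0 < p) (hnp : 1 ≤ (n:ℝ) * p) :
    gnp n p ((GoodSet n p)ᶜ)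
      ≤ ENNReal.ofReal ((1/40) * ((27/4)*(n:ℝ)*p^2)^6 * 6^6 * 2) := by
  have hn0 : (0:ℝ) < n := by nlinarith
  set qm : ENNReal := min (ENNReal.ofReal p) 1 with hqm
  set K : Finset ℕ := (Finset.range (n+1)).filter
    (fun k => 6 ≤ k ∧ (k:ℝ) ≤ (n:ℝ) / (60 * ((n:ℝ)*p)^2)) with hK
  set U : Set (Fin n → Fin n → Bool) :=
    ⋃ k ∈ K, ⋃ S ∈ Finset.powersetCard k (Finset.univ : Finset (Fin n)),
      ⋃ T ∈ Finset.powersetCard (2*k+1) (allPairs n S), eventT T with hU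
  -- inclusion
  have hincl : (GoodSet n p)ᶜ ⊆ U := by
    intro ω hω
    simp only [GoodSet, Set.mem_compl_iff, Set.mem_setOf_eq, not_forall] at hω
    obtain ⟨S, hconn, hsize, hfail⟩ := hω
    have hlow : (S.card : ℝ) - 1 ≤ (edgesIn (graphOf ω) (S : Set (Fin n)) : ℝ) := by
      have h := conn_lower (graphOf ω) S hconn
      have h' : (S.card:ℝ) ≤ (edgesIn (graphOf ω) (S : Set (Fin n)) : ℝ) + 1 := by
        exact_mod_cast h
      linarith
    have hhigh : 2 * S.card < edgesIn (graphOf ω) (S : Set (Fin n)) := by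
      by_contra hcon
      exact hfail ⟨hlow, by omega⟩
    have hk6 : 6 ≤ S.card := by
      by_contra hcon
      have h1 : edgesIn (graphOf ω) ↑S ≤ (S.card).choose 2 := edgesIn_le_choose _ _
      have h2 : ∀ m : ℕ, m ≤ 5 → m.choose 2 ≤ 2*m := by
        intro m hm; interval_cases m <;> decide
      have := h2 S.card (by omega)
      omega
    have hpairs : 2 * S.card + 1 ≤ (edgePairs ω S).card := by
      have := edgesIn_le_pairs ω S
      omega
    obtain ⟨T, hTsub, hTcard⟩ := Finset.exists_subset_card_eq hpairs
    simp only [hU, Set.mem_iUnion]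
    refine ⟨S.card, ?_, S, ?_, T, ?_, ?_⟩
    · simp only [hK, Finset.mem_filter, Finset.mem_range]
      exact ⟨by have := S.card_le_univ; simp at this; omega, hk6, hsize⟩
    · simp [Finset.mem_powersetCard]
    · rw [Finset.mem_powersetCard]
      refine ⟨hTsub.trans ?_, hTcard⟩
      exact Finset.filter_subset _ _
    · intro q hq
      have := hTsub hq
      simp only [edgePairs, Finset.mem_filter] at this
      exact this.2
  -- union bound
  calc gnp n p ((GoodSet n p)ᶜ) ≤ gnp n p U := measure_mono hincl
    _ ≤ ∑ k ∈ K, ∑ S ∈ Finset.powersetCard k (Finset.univ : Finset (Fin n)),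
          ∑ T ∈ Finset.powersetCard (2*k+1) (allPairs n S), gnp n p (eventT T) := by
        refine (measure_biUnion_finset_le _ _).trans ?_
        apply Finset.sum_le_sum
        intro k _
        refine (measure_biUnion_finset_le _ _).trans ?_
        apply Finset.sum_le_sum
        intro S _
        exact measure_biUnion_finset_le _ _
    _ ≤ ∑ k ∈ K, ((n.choose k : ENNReal) * (((k^2).choose (2*k+1) : ℕ) : ENNReal)
          * qm ^ (2*k+1)) := by
        apply Finset.sum_le_sum
        intro k hk
        have hSk : ∀ S ∈ Finset.powersetCard k (Finset.univ : Finset (Fin n)),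
            ∑ T ∈ Finset.powersetCard (2*k+1) (allPairs n S), gnp n p (eventT T)
              ≤ (((k^2).choose (2*k+1) : ℕ) : ENNReal) * qm ^ (2*k+1) := by
          intro S hS
          rw [Finset.mem_powersetCard] at hS
          have hcardS : S.card = k := hS.2
          have hsum : ∑ T ∈ Finset.powersetCard (2*k+1) (allPairs n S), gnp n p (eventT T)
              = (((allPairs n S).card.choose (2*k+1) : ℕ) : ENNReal) * qm ^ (2*k+1) := by
            rw [Finset.sum_congr rfl (fun T hT => ?_)]
            · rw [Finset.sum_const, Finset.card_powersetCard, nsmul_eq_mul]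
            · rw [meas_eventT, (Finset.mem_powersetCard.mp hT).2]
          rw [hsum]
          apply mul_le_mul_left
          have hap : (allPairs n S).card ≤ k^2 := by
            calc (allPairs n S).card ≤ (S ×ˢ S).card := Finset.card_filter_le _ _
              _ = k^2 := by rw [Finset.card_product, hcardS]; ring
          exact_mod_cast Nat.choose_le_choose (2*k+1) hap
        calc ∑ S ∈ Finset.powersetCard k (Finset.univ : Finset (Fin n)),
              ∑ T ∈ Finset.powersetCard (2*k+1) (allPairs n S), gnp n p (eventT T)
            ≤ ∑ _S ∈ Finset.powersetCard k (Finset.univ : Finset (Fin n)),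
              ((((k^2).choose (2*k+1) : ℕ)) : ENNReal) * qm ^ (2*k+1) :=
              Finset.sum_le_sum hSk
          _ = ((n.choose k : ENNReal)) * ((((k^2).choose (2*k+1) : ℕ)) : ENNReal)
              * qm ^ (2*k+1) := by
              rw [Finset.sum_const, Finset.card_powersetCard, nsmul_eq_mul]
              rw [Finset.card_univ, Fintype.card_fin]
              ring
    _ ≤ ∑ k ∈ K, ENNReal.ofReal
          ((1/40) * ((27/4)*(n:ℝ)*p^2)^6 * 6^6 * (27/80)^(k-6)) := by
        apply Finset.sum_le_sum
        intro k hk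
        simp only [hK, Finset.mem_filter, Finset.mem_range] at hk
        obtain ⟨hkn, hk6, hkb⟩ := hk
        have h60 : 60 * (k:ℝ) * (n:ℝ) * p^2 ≤ 1 := by
          have hd : (0:ℝ) < 60*((n:ℝ)*p)^2 := by positivity
          have h1 : (k:ℝ) * (60*((n:ℝ)*p)^2) ≤ (n:ℝ) := (le_div_iff₀ hd).mp hkb
          have h2 : 60 * (k:ℝ) * (n:ℝ) * p^2 * (n:ℝ) ≤ 1 * (n:ℝ) := by nlinarith
          exact le_of_mul_le_mul_right h2 hn0
        have hq1 : qm ^ (2*k+1) ≤ ENNReal.ofReal (p^(2*k+1)) := by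
          calc qm ^ (2*k+1) ≤ (ENNReal.ofReal p) ^ (2*k+1) :=
                pow_le_pow_left' (min_le_left _ _) _
            _ = ENNReal.ofReal (p^(2*k+1)) := (ENNReal.ofReal_pow hp0.le _).symm
        have hterm : (n.choose k : ENNReal) * (((k^2).choose (2*k+1) : ℕ) : ENNReal)
            * qm ^ (2*k+1)
            ≤ ENNReal.ofReal ((n.choose k : ℝ) * (((k^2).choose (2*k+1)) : ℝ)
                * p^(2*k+1)) := by
          rw [ENNReal.ofReal_mul (by positivity), ENNReal.ofReal_mul (by positivity),
            ENNReal.ofReal_natCast, ENNReal.ofReal_natCast]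
          exact mul_le_mul_right hq1 _
        refine hterm.trans ?_
        exact ENNReal.ofReal_le_ofReal (per_k n k p hk6 hp0 hnp h60)
    _ = ENNReal.ofReal (∑ k ∈ K,
          (1/40) * ((27/4)*(n:ℝ)*p^2)^6 * 6^6 * (27/80)^(k-6)) := by
        rw [ENNReal.ofReal_sum_of_nonneg]
        intro k _
        positivity
    _ ≤ ENNReal.ofReal ((1/40) * ((27/4)*(n:ℝ)*p^2)^6 * 6^6 * 2) := by
        apply ENNReal.ofReal_le_ofReal
        have hgeom : ∑ k ∈ K, ((27:ℝ)/80)^(k-6) ≤ 2 := by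
          have hinj : ∀ x ∈ K, ∀ y ∈ K, x - 6 = y - 6 → x = y := by
            intro x hx y hy hxy
            simp only [hK, Finset.mem_filter, Finset.mem_range] at hx hy
            omega
          have himg : ∑ k ∈ K, ((27:ℝ)/80)^(k-6)
              = ∑ j ∈ K.image (· - 6), ((27:ℝ)/80)^j := (Finset.sum_image hinj).symm
          rw [himg]
          have hsub : K.image (· - 6) ⊆ Finset.range (n+1) := by
            intro j hj
            simp only [Finset.mem_image, hK, Finset.mem_filter, Finset.mem_range] at hj
            obtain ⟨k, ⟨hkn, _, _⟩, rfl⟩ := hj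
            simp only [Finset.mem_range]
            omega
          calc ∑ j ∈ K.image (· - 6), ((27:ℝ)/80)^j
              ≤ ∑ j ∈ Finset.range (n+1), ((27:ℝ)/80)^j :=
                Finset.sum_le_sum_of_subset_of_nonneg hsub (fun j _ _ => by positivity)
            _ ≤ ((27:ℝ)/80)^0 / (1 - 27/80) := by
                rw [Finset.range_eq_Ico]
                exact geom_sum_Ico_le_of_lt_one (by norm_num) (by norm_num)
            _ ≤ 2 := by norm_num
        calc ∑ k ∈ K, (1/40) * ((27/4)*(n:ℝ)*p^2)^6 * 6^6 * (27/80)^(k-6)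
            = (1/40) * ((27/4)*(n:ℝ)*p^2)^6 * 6^6 * ∑ k ∈ K, ((27:ℝ)/80)^(k-6) := by
              rw [Finset.mul_sum]
          _ ≤ (1/40) * ((27/4)*(n:ℝ)*p^2)^6 * 6^6 * 2 := by
              apply mul_le_mul_of_nonneg_left hgeom (by positivity)

/-- For `1/n < p ≤ 2 ln n/n`, a.a.s. every connected set `S` with
`|S| ≤ n/(60 d²)` satisfies `|S| − 1 ≤ e(S) ≤ 2|S|`. -/
theorem edges_in_small_connected_sets (p : ℕ → ℝ)
    (hp : ∀ᶠ n : ℕ in atTop, 1 / (n : ℝ) < p n ∧ p n ≤ 2 * Real.log n / n) :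
    Tendsto (fun n : ℕ =>
      gnp n (p n) {ω | ∀ S : Finset (Fin n), connSet (graphOf ω) (S : Set (Fin n)) →
        (S.card : ℝ) ≤ n / (60 * ((n : ℝ) * p n) ^ 2) →
        (S.card : ℝ) - 1 ≤ (edgesIn (graphOf ω) (S : Set (Fin n)) : ℝ) ∧
          edgesIn (graphOf ω) (S : Set (Fin n)) ≤ 2 * S.card})
      atTop (nhds 1) := by
  show Tendsto (fun n : ℕ => gnp n (p n) (GoodSet n (p n))) atTop (nhds 1)
  set B : ℕ → ℝ := fun n => (1/40) * ((27/4)*(n:ℝ)*(p n)^2)^6 * 6^6 * 2 with hBdef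
  -- B tends to 0
  have t0 : Tendsto (fun n : ℕ => (n:ℝ) * (p n)^2) atTop (nhds 0) := by
    have hg : Tendsto (fun n : ℕ => 4 * (Real.log n ^ 2 / (1 * (n:ℝ) + 0)))
        atTop (nhds 0) := by
      have := (Real.tendsto_pow_log_div_mul_add_atTop 1 0 2 one_ne_zero).comp
        (tendsto_natCast_atTop_atTop (R := ℝ))
      simpa using this.const_mul 4
    apply squeeze_zero' ?h1 ?h2 hg
    · filter_upwards [hp] with n hn
      have hp0 : 0 < p n := lt_of_le_of_lt (by positivity) hn.1
      positivity
    · filter_upwards [hp, eventually_ge_atTop 1] with n hn hn1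
      have hn0 : (0:ℝ) < n := by exact_mod_cast hn1
      have hp0 : 0 < p n := lt_of_le_of_lt (by positivity) hn.1
      have h2 : p n ≤ 2 * Real.log n / n := hn.2
      have : (n:ℝ) * (p n)^2 ≤ (n:ℝ) * (2 * Real.log n / n)^2 := by
        apply mul_le_mul_of_nonneg_left _ hn0.le
        apply pow_le_pow_left₀ hp0.le h2
      calc (n:ℝ) * (p n)^2 ≤ (n:ℝ) * (2 * Real.log n / n)^2 := this
        _ = 4 * (Real.log n ^ 2 / (1 * (n:ℝ) + 0)) := by field_simp; ring
  have hB0 : Tendsto B atTop (nhds 0) := by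
    have t1 : Tendsto (fun n : ℕ => (27/4) * ((n:ℝ) * (p n)^2)) atTop (nhds 0) := by
      simpa using t0.const_mul (27/4 : ℝ)
    have t2 : Tendsto (fun n : ℕ => ((27/4) * ((n:ℝ) * (p n)^2))^6) atTop (nhds 0) := by
      simpa using t1.pow 6
    have t3 : Tendsto (fun n : ℕ =>
        ((1:ℝ)/40 * 6^6 * 2) * ((27/4) * ((n:ℝ) * (p n)^2))^6) atTop (nhds 0) := by
      simpa using t2.const_mul ((1:ℝ)/40 * 6^6 * 2)
    apply t3.congr
    intro n
    simp only [hBdef]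
    ring
  have hofReal : Tendsto (fun n : ℕ => ENNReal.ofReal (B n)) atTop (nhds 0) := by
    rw [← ENNReal.ofReal_zero]
    exact ENNReal.tendsto_ofReal hB0
  have hlow : Tendsto (fun n : ℕ => 1 - ENNReal.ofReal (B n)) atTop (nhds 1) := by
    have := ENNReal.Tendsto.sub (tendsto_const_nhds (x := (1:ENNReal))) hofReal
      (Or.inl ENNReal.one_ne_top)
    simpa using this
  apply tendsto_of_tendsto_of_tendsto_of_le_of_le' hlow tendsto_const_nhds
  · -- eventual lower bound
    filter_upwards [hp, eventually_ge_atTop 1] with n hn hn1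
    have hn0 : (0:ℝ) < n := by exact_mod_cast hn1
    have hp0 : 0 < p n := lt_of_le_of_lt (by positivity) hn.1
    have hnp : 1 ≤ (n:ℝ) * p n := by
      have := (div_lt_iff₀ hn0).mp hn.1
      nlinarith
    have hb := main_bound n (p n) hp0 hnp
    have h1 : (1:ENNReal) ≤ gnp n (p n) (GoodSet n (p n))
        + gnp n (p n) ((GoodSet n (p n))ᶜ) := by
      have := measure_union_le (μ := gnp n (p n)) (GoodSet n (p n)) ((GoodSet n (p n))ᶜ)
      rw [Set.union_compl_self, measure_univ] at this
      exact this
    rw [tsub_le_iff_right]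
    calc (1:ENNReal) ≤ gnp n (p n) (GoodSet n (p n)) + gnp n (p n) ((GoodSet n (p n))ᶜ) := h1
      _ ≤ gnp n (p n) (GoodSet n (p n)) + ENNReal.ofReal (B n) := by
          exact add_le_add_right hb _
  · exact Eventually.of_forall fun n => prob_le_one

end
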